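/- Let A = (Q, Σ, δ, ρ) be a connected invertible reversible Mealy automaton that is not bireversible. Then every state of A induces an action of infinite order: for every x ∈ Q, the transformations ρ_x, ρ_x², ρ_x³, … of Σ* are pairwise distinct. -/

import Mathlib

/-!
Mealy automata: common definitions.

A Mealy automaton on stateset `Q` and alphabet `Γ` is given by transition
functions `δ : Γ → Q → Q` (for each input letter) and output functions
`ρ : Q → Γ → Γ` (for each state); it has a transition `x —i|j→ y` exactly
when `δ i x = y` and `ρ x i = j`.
-/

/-- Extended output function `ρ_x : Γ* → Γ*` of a single state. -/
def rhoStar {Q Γ : Type*} (δ : Γ → Q → Q) (ρ : Q → Γ → Γ) : Q → List Γ → List Γ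
  | _, [] => []
  | x, i :: s => ρ x i :: rhoStar δ ρ (δ i x) s

/-- `ρ_u : Γ* → Γ*` for a word `u = x₁⋯x_n` of states: `ρ_u = ρ_{x_n} ∘ ⋯ ∘ ρ_{x₁}`. -/
def rhoWord {Q Γ : Type*} (δ : Γ → Q → Q) (ρ : Q → Γ → Γ) : List Q → List Γ → List Γ
  | [], s => s
  | x :: u, s => rhoWord δ ρ u (rhoStar δ ρ x s)

/-- `ρ_u : Γ → Γ` on single letters (the output function of the power automaton). -/
def rhoLetter {Q Γ : Type*} (ρ : Q → Γ → Γ) : List Q → Γ → Γ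
  | [], i => i
  | x :: u, i => rhoLetter ρ u (ρ x i)

/-- Extended transition function `δ_i : Q* → Q*` (the transition function of powers). -/
def deltaStar {Q Γ : Type*} (δ : Γ → Q → Q) (ρ : Q → Γ → Γ) : Γ → List Q → List Q
  | _, [] => []
  | i, x :: u => δ i x :: deltaStar δ ρ (ρ x i) u

/-- Sequential application `δ_s = δ_{s_n} ∘ ⋯ ∘ δ_{s₁}` of the letters of a word `s`. -/
def applyWord {S Γ : Type*} (d : Γ → S → S) : List Γ → S → S
  | [], x => x
  | i :: s, x => applyWord d s (d i x)

/-- The orbit `{δ_s(x) : s ∈ Γ*}` of a state: for reversible automata this is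
exactly the (strongly) connected component of `x`. -/
def orbitOf {S Γ : Type*} (d : Γ → S → S) (x : S) : Set S :=
  {y | ∃ s : List Γ, applyWord d s x = y}

/-- An automaton is invertible when every output function is a permutation. -/
def MInvertible {Q Γ : Type*} (ρ : Q → Γ → Γ) : Prop := ∀ x, Function.Bijective (ρ x)

/-- An automaton is reversible when every transition function is a permutation. -/
def MReversible {Q Γ : Type*} (δ : Γ → Q → Q) : Prop := ∀ i, Function.Bijective (δ i)

/-- Coreversibility: `δ_i(y) = δ_{i'}(z)` and `ρ_y(i) = ρ_z(i')` imply `y = z`. -/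
def MCoreversible {Q Γ : Type*} (δ : Γ → Q → Q) (ρ : Q → Γ → Γ) : Prop :=
  ∀ y z : Q, ∀ i i' : Γ, δ i y = δ i' z → ρ y i = ρ z i' → y = z

/-- Bireversible: invertible, reversible and coreversible. -/
def MBireversible {Q Γ : Type*} (δ : Γ → Q → Q) (ρ : Q → Γ → Γ) : Prop :=
  MInvertible ρ ∧ MReversible δ ∧ MCoreversible δ ρ

/-- Connectedness: every state is reachable from every state. -/
def MConnected {Q Γ : Type*} (δ : Γ → Q → Q) : Prop :=
  ∀ x y : Q, ∃ s : List Γ, applyWord δ s x = y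

/-- Invertibility of a component `C` (as an automaton with stateset `C`). -/
def CompInvertible {S Γ : Type*} (r : S → Γ → Γ) (C : Set S) : Prop :=
  ∀ x ∈ C, Function.Bijective (r x)

/-- Reversibility of a component `C`: each transition function permutes `C`. -/
def CompReversible {S Γ : Type*} (d : Γ → S → S) (C : Set S) : Prop :=
  ∀ i : Γ, Set.BijOn (d i) C C

/-- Coreversibility of a component `C` (as an automaton with stateset `C`). -/
def CompCoreversible {S Γ : Type*} (d : Γ → S → S) (r : S → Γ → Γ) (C : Set S) : Prop :=
  ∀ y ∈ C, ∀ z ∈ C, ∀ i i' : Γ, d i y = d i' z → r y i = r z i' → y = z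

/-- Bireversibility of a component `C` (as an automaton with stateset `C`). -/
def CompBireversible {S Γ : Type*} (d : Γ → S → S) (r : S → Γ → Γ) (C : Set S) : Prop :=
  CompInvertible r C ∧ CompReversible d C ∧ CompCoreversible d r C

/-- Transition functions of the product `A × B` of two Mealy automata. -/
def prodD {Q Q' Γ : Type*} (δ : Γ → Q → Q) (ρ : Q → Γ → Γ) (δ' : Γ → Q' → Q') :
    Γ → Q × Q' → Q × Q' :=
  fun i p => (δ i p.1, δ' (ρ p.1 i) p.2)

/-- Output functions of the product `A × B` of two Mealy automata. -/
def prodR {Q Q' Γ : Type*} (ρ : Q → Γ → Γ) (ρ' : Q' → Γ → Γ) : Q × Q' → Γ → Γ :=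
  fun p i => ρ' p.2 (ρ p.1 i)

/-- `u^n`: the `n`-fold concatenation of a word with itself. -/
def wordPow {Q : Type*} (u : List Q) : ℕ → List Q
  | 0 => []
  | n + 1 => u ++ wordPow u n

/-!
If some positive power `ρ_x^n` were the identity, then so would be `ρ_u` for the word
`u = xⁿ` and for every word in its orbit under the dual automaton (whose transitions are the
`δ_i : Qⁿ → Qⁿ`). This orbit is finite, so each `δ_i` permutes it, and connectedness puts
every state at the head of some word of the orbit. Given `δ_i(y) = δ_{i'}(z)` and
`ρ_y(i) = ρ_z(i')`, pulling `δ_i(y t)` back along `δ_{i'}` yields `z t` in the orbit; since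
`ρ_{y t}` and `ρ_{z t}` both fix letters, `i = i'`, and reversibility gives `y = z`. So the
automaton would be coreversible, hence bireversible. As `ρ_x` is injective, two equal
positive powers would give a positive power equal to the identity.
-/

section Orbit

variable {S Γ : Type*} {d : Γ → S → S}

lemma applyWord_append (s t : List Γ) (x : S) :
    applyWord d (s ++ t) x = applyWord d t (applyWord d s x) := by
  induction s generalizing x with
  | nil => rfl
  | cons i s ih => exact ih (d i x)

lemma mapsTo_applyWord {T : Set S} (h : ∀ i, Set.MapsTo (d i) T T) (s : List Γ) :
    Set.MapsTo (applyWord d s) T T := by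
  induction s with
  | nil => exact Set.mapsTo_id T
  | cons i s ih => exact ih.comp (h i)

lemma orbitOf_subset {T : Set S} (h : ∀ i, Set.MapsTo (d i) T T) {x : S} (hx : x ∈ T) :
    orbitOf d x ⊆ T := by
  rintro _ ⟨s, rfl⟩
  exact mapsTo_applyWord h s hx

lemma mapsTo_orbitOf (x : S) (i : Γ) : Set.MapsTo (d i) (orbitOf d x) (orbitOf d x) := by
  rintro _ ⟨s, rfl⟩
  exact ⟨s ++ [i], applyWord_append s [i] x⟩

lemma surjOn_orbitOf (hd : ∀ i, Function.Injective (d i)) {x : S}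
    (hfin : (orbitOf d x).Finite) (i : Γ) : Set.SurjOn (d i) (orbitOf d x) (orbitOf d x) :=
  ((hfin.injOn_iff_bijOn_of_mapsTo (mapsTo_orbitOf x i)).mp (hd i).injOn).surjOn

end Orbit

section Mealy

variable {Q Γ : Type*} {δ : Γ → Q → Q} {ρ : Q → Γ → Γ}

lemma rhoStar_injective (hInv : MInvertible ρ) (x : Q) : Function.Injective (rhoStar δ ρ x) := by
  intro s t h
  induction s generalizing x t with
  | nil => cases t <;> simp_all [rhoStar]
  | cons i s ih =>
    cases t with
    | nil => simp [rhoStar] at h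
    | cons j t =>
      simp only [rhoStar, List.cons.injEq] at h
      obtain rfl := (hInv x).1 h.1
      rw [ih (δ i x) h.2]

lemma rhoWord_replicate (x : Q) (n : ℕ) :
    rhoWord δ ρ (List.replicate n x) = (rhoStar δ ρ x)^[n] := by
  funext s
  induction n generalizing s with
  | zero => rfl
  | succ n ih => exact ih (rhoStar δ ρ x s)

lemma rhoWord_cons (u : List Q) (i : Γ) (s : List Γ) :
    rhoWord δ ρ u (i :: s) = rhoLetter ρ u i :: rhoWord δ ρ (deltaStar δ ρ i u) s := by
  induction u generalizing i s with
  | nil => rfl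
  | cons x u ih => exact ih (ρ x i) (rhoStar δ ρ (δ i x) s)

lemma length_deltaStar (i : Γ) (u : List Q) : (deltaStar δ ρ i u).length = u.length := by
  induction u generalizing i with
  | nil => rfl
  | cons x u ih => simp [deltaStar, ih]

lemma deltaStar_injective (hRev : MReversible δ) (i : Γ) :
    Function.Injective (deltaStar δ ρ i) := by
  intro u v h
  induction u generalizing i v with
  | nil => cases v <;> simp_all [deltaStar]
  | cons x u ih =>
    cases v with
    | nil => simp [deltaStar] at h
    | cons y v =>
      simp only [deltaStar, List.cons.injEq] at h
      obtain rfl := (hRev i).1 h.1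
      rw [ih (ρ x i) h.2]

lemma orbitOf_deltaStar_finite [Finite Q] (u : List Q) :
    (orbitOf (deltaStar δ ρ) u).Finite :=
  (List.finite_length_eq Q u.length).subset <|
    orbitOf_subset (T := {v : List Q | v.length = u.length})
      (fun i v (hv : v.length = u.length) => (length_deltaStar i v).trans hv) rfl

lemma exists_applyWord_deltaStar_cons (s : List Γ) (x : Q) (u : List Q) :
    ∃ t, applyWord (deltaStar δ ρ) s (x :: u) = applyWord δ s x :: t := by
  induction s generalizing x u with
  | nil => exact ⟨u, rfl⟩
  | cons i s ih => exact ih (δ i x) (deltaStar δ ρ (ρ x i) u)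

lemma exists_cons_mem_orbitOf_deltaStar (hConn : MConnected δ) (x y : Q) (u : List Q) :
    ∃ t, y :: t ∈ orbitOf (deltaStar δ ρ) (x :: u) := by
  obtain ⟨s, rfl⟩ := hConn x y
  obtain ⟨t, ht⟩ := exists_applyWord_deltaStar_cons (δ := δ) (ρ := ρ) s x u
  exact ⟨t, s, ht⟩

lemma rhoLetter_eq_id {u : List Q} (h : rhoWord δ ρ u = id) : rhoLetter ρ u = id := by
  funext i
  have := congrFun h [i]
  rw [rhoWord_cons] at this
  exact (List.cons.inj this).1

lemma rhoWord_deltaStar_eq_id {u : List Q} (h : rhoWord δ ρ u = id) (i : Γ) :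
    rhoWord δ ρ (deltaStar δ ρ i u) = id := by
  funext s
  have := congrFun h (i :: s)
  rw [rhoWord_cons] at this
  exact (List.cons.inj this).2

lemma rhoWord_eq_id_of_mem_orbitOf {u v : List Q} (hu : rhoWord δ ρ u = id)
    (hv : v ∈ orbitOf (deltaStar δ ρ) u) : rhoWord δ ρ v = id :=
  orbitOf_subset (T := {v | rhoWord δ ρ v = id})
    (fun i _ hw => rhoWord_deltaStar_eq_id hw i) hu hv

theorem coreversible_of_rhoWord_eq_id [Finite Q] (hConn : MConnected δ) (hRev : MReversible δ)
    {x : Q} {u : List Q} (hu : rhoWord δ ρ (x :: u) = id) : MCoreversible δ ρ := by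
  intro y z i i' hδ hρ
  obtain ⟨t, hyt⟩ := exists_cons_mem_orbitOf_deltaStar (ρ := ρ) hConn x y u
  obtain ⟨v, hvC, hv⟩ := surjOn_orbitOf (deltaStar_injective hRev)
    (orbitOf_deltaStar_finite _) i' (mapsTo_orbitOf _ i hyt)
  obtain _ | ⟨z', t'⟩ := v
  · simp [deltaStar] at hv
  simp only [deltaStar, List.cons.injEq] at hv
  obtain rfl : z = z' := ((hRev i').1 (hv.1.trans hδ)).symm
  obtain rfl : t = t' := (deltaStar_injective hRev _ (hv.2.trans (by rw [hρ]))).symm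
  have hy := rhoLetter_eq_id (rhoWord_eq_id_of_mem_orbitOf hu hyt)
  have hz := rhoLetter_eq_id (rhoWord_eq_id_of_mem_orbitOf hu hvC)
  obtain rfl : i = i' :=
    calc i = rhoLetter ρ (y :: t) i := (congrFun hy i).symm
      _ = rhoLetter ρ (z :: t) i' := congrArg (rhoLetter ρ t) hρ
      _ = i' := congrFun hz i'
  exact (hRev i).1 hδ

theorem iterate_rhoStar_ne_id [Finite Q] (hConn : MConnected δ) (hRev : MReversible δ)
    (hCore : ¬ MCoreversible δ ρ) (x : Q) {n : ℕ} (hn : 0 < n) :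
    (rhoStar δ ρ x)^[n] ≠ id := by
  intro h
  obtain ⟨m, rfl⟩ := Nat.exists_eq_add_one_of_ne_zero hn.ne'
  rw [← rhoWord_replicate, List.replicate_succ] at h
  exact hCore (coreversible_of_rhoWord_eq_id hConn hRev h)

end Mealy

theorem state_infinite_order_of_connected_nonbireversible_general
    {Q Γ : Type*} [Fintype Q]
    (δ : Γ → Q → Q) (ρ : Q → Γ → Γ)
    (hConn : MConnected δ) (hInv : MInvertible ρ) (hRev : MReversible δ)
    (hNotBir : ¬ MBireversible δ ρ) :
    ∀ x : Q, ∀ p q : ℕ,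
      (rhoStar δ ρ x)^[p + 1] = (rhoStar δ ρ x)^[q + 1] → p = q := by
  intro x p q h
  have hCore : ¬ MCoreversible δ ρ := fun hCore => hNotBir ⟨hInv, hRev, hCore⟩
  have cancel : ∀ {a b : ℕ}, (rhoStar δ ρ x)^[a] = (rhoStar δ ρ x)^[b] →
      (rhoStar δ ρ x)^[a - b] = id := fun hab =>
    funext fun s => Function.iterate_cancel (rhoStar_injective hInv x) (congrFun hab s)
  by_contra hpq
  rcases Nat.lt_or_gt_of_ne hpq with hlt | hlt
  · exact iterate_rhoStar_ne_id hConn hRev hCore x (by omega) (cancel h.symm)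
  · exact iterate_rhoStar_ne_id hConn hRev hCore x (by omega) (cancel h)

/-- In a connected invertible reversible non-bireversible
Mealy automaton, every state induces an action of infinite order: the
positive powers of `ρ_x : Γ* → Γ*` are pairwise distinct. -/
theorem state_infinite_order_of_connected_nonbireversible
    {Q Γ : Type*} [Fintype Q] [Fintype Γ] [Nonempty Q] [Nonempty Γ]
    (δ : Γ → Q → Q) (ρ : Q → Γ → Γ)
    (hConn : MConnected δ) (hInv : MInvertible ρ) (hRev : MReversible δ)
    (hNotBir : ¬ MBireversible δ ρ) :
    ∀ x : Q, ∀ p q : ℕ,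
      (rhoStar δ ρ x)^[p + 1] = (rhoStar δ ρ x)^[q + 1] → p = q :=
  state_infinite_order_of_connected_nonbireversible_general δ ρ hConn hInv hRev hNotBir
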